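/- arXiv:2407.04912 — 2 statements merged into one kernel-verified Lean document; each statement's English description precedes it below -/
import Mathlib

section
/- Let p and q be perfect paths in a monomial algebra Λ with p ≺ q (p a proper left divisor of q). Then there exists an arrow q → p in the Hasse quiver of (ℙ_Λ, ⪯) if and only if the perfect path r in the factorization q = pr is co-elementary. -/
/-! Combinatorial model of a monomial algebra `Λ = KQ/I`.

A finite quiver is given by source and target maps on a type of arrows.
A (nontrivial) path is encoded as a nonempty list of composable arrows;
the admissible monomial ideal `I` is encoded by its set `F` of minimal
generating paths, and a path is zero in `Λ` iff it contains a member of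
`F` as a contiguous subpath (infix). -/

/-- A quiver structure on arrow type `E` with vertex type `V`. -/
structure QuiverData (V E : Type) where
  src : E → V
  tgt : E → V

namespace QuiverData

variable {V E : Type} (Q : QuiverData V E)

/-- `l` is the list of arrows of a path of `Q`. -/
def IsPath (l : List E) : Prop := l.Chain' fun a b => Q.tgt a = Q.src b

/-- Two paths are composable: the target of the first equals the source of
the second (vacuously true if one of them is trivial). -/
def Composable (l m : List E) : Prop :=
  ∀ a ∈ l.getLast?, ∀ b ∈ m.head?, Q.tgt a = Q.src b

end QuiverData

/-- A monomial algebra, encoded combinatorially: a finite quiver together with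
the set `F` of minimal paths generating the admissible monomial ideal `I`. -/
structure MonomialData (V E : Type) extends QuiverData V E where
  F : Set (List E)
  F_path : ∀ f ∈ F, toQuiverData.IsPath f
  F_len : ∀ f ∈ F, 2 ≤ f.length
  F_min : ∀ f ∈ F, ∀ g, g <:+: f → (∃ f' ∈ F, f' <:+: g) → g = f
  admissible : ∃ N, ∀ l, toQuiverData.IsPath l → N ≤ l.length → ∃ f ∈ F, f <:+: l

namespace MonomialData

variable {V E : Type} (M : MonomialData V E)

/-- The path `l` is zero in `Λ`. -/
def IsZero (l : List E) : Prop := ∃ f ∈ M.F, f <:+: l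

/-- `l` is a path which is nonzero in `Λ`. -/
def Nonzero (l : List E) : Prop := M.toQuiverData.IsPath l ∧ ¬ M.IsZero l

/-- A perfect pair of nonzero nontrivial paths, after Chen–Shen–Zhou. -/
def PerfectPair (p q : List E) : Prop :=
  p ≠ [] ∧ q ≠ [] ∧ M.Nonzero p ∧ M.Nonzero q ∧
  M.toQuiverData.Composable p q ∧ M.IsZero (p ++ q) ∧
  (∀ q', q' ≠ [] → M.Nonzero q' → M.toQuiverData.Composable p q' →
      M.IsZero (p ++ q') → q <+: q') ∧
  (∀ p', p' ≠ [] → M.Nonzero p' → M.toQuiverData.Composable p' q →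
      M.IsZero (p' ++ q) → p <:+ p')

/-- A perfect path: a path appearing in a perfect path sequence
`(p₁, …, pₙ, pₙ₊₁ = p₁)`, encoded by a periodic sequence of paths each of
whose consecutive pairs is perfect. -/
def IsPerfect (p : List E) : Prop :=
  ∃ (n : ℕ) (s : ℕ → List E), 0 < n ∧ s 0 = p ∧ (∀ i, s (i + n) = s i) ∧
    ∀ i, M.PerfectPair (s i) (s (i + 1))

/-- `c` is the underlying cycle associated with the perfect path `p`:
the shortest cycle `c` with `p₁ ⋯ pₙ = cˡ` for some `l > 0`, for a perfect
path sequence through `p`. -/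
def IsUnderlyingCycleOf (c p : List E) : Prop :=
  ∃ (n : ℕ) (s : ℕ → List E), 0 < n ∧ s 0 = p ∧ (∀ i, s (i + n) = s i) ∧
    (∀ i, M.PerfectPair (s i) (s (i + 1))) ∧
    (∃ l, 0 < l ∧ ((List.range n).map s).flatten = (List.replicate l c).flatten) ∧
    (∀ c' l', 0 < l' → ((List.range n).map s).flatten = (List.replicate l' c').flatten →
      c.length ≤ c'.length)


/-- There is an overlap between the perfect paths `p` and `q` (`p` overlaps `q`). -/
def Overlap (p q : List E) : Prop :=
  ∃ x p' q' : List E, x ≠ [] ∧ p = p' ++ x ∧ q = x ++ q' ∧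
    M.Nonzero (p' ++ x ++ q') ∧ (p = q → p' ≠ [] ∧ q' ≠ [])

/-- An elementary perfect path: a source in the Hasse quiver of the left
divisibility order `⪯` on perfect paths, i.e. it is not a proper left divisor
of any perfect path. -/
def Elementary (p : List E) : Prop :=
  M.IsPerfect p ∧ ¬ ∃ q, M.IsPerfect q ∧ p <+: q ∧ p ≠ q

/-- A co-elementary perfect path: a sink in the Hasse quiver of `⪯`, i.e.
no proper left divisor of it is perfect. -/
def CoElementary (p : List E) : Prop :=
  M.IsPerfect p ∧ ¬ ∃ q, M.IsPerfect q ∧ q <+: p ∧ q ≠ p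

/-- There is an arrow `q ⟶ p` in the Hasse quiver of `(ℙ_Λ, ⪯)`:
`p ≺ q` and no perfect path lies strictly between them. -/
def HasseArrowPrec (q p : List E) : Prop :=
  M.IsPerfect p ∧ M.IsPerfect q ∧ p <+: q ∧ p ≠ q ∧
    ¬ ∃ r, M.IsPerfect r ∧ p <+: r ∧ p ≠ r ∧ r <+: q ∧ r ≠ q

end MonomialData

/-- Two cycles are equivalent (agree up to cyclic permutation): each is a
subpath of a power of the other. -/
def CyclesEquiv {E : Type} (c d : List E) : Prop :=
  ∃ m k, 0 < m ∧ 0 < k ∧ c <:+: (List.replicate m d).flatten ∧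
    d <:+: (List.replicate k c).flatten


/-! Compare perfect sequences `(pᵢ)` through `p` and `(qᵢ)` through `q = p r`. They overhang each
other alternately, `q₂ₖ = p₂ₖ cₖ` and `p₂ₖ₊₁ = cₖ q₂ₖ₊₁` with `cₖ` nontrivial, and
`(c₀, q₁ p₂, c₁, q₃ p₄, …)` is again a perfect sequence; as `c₀ = r`, the path `r` is perfect.
Conversely, if `t` and `q = p t t'` are perfect, then `p₁ = t t' q₁` and `(p t, t' q₁)` is a
perfect pair whose right member is perfect by the first part, so `p t` is perfect. Hence the
perfect paths strictly between `p` and `p r` are the `p t` with `t` a perfect proper left divisor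
of `r`. -/

namespace QuiverData

variable {V E : Type} {Q : QuiverData V E} {a b c : List E}

theorem isPath_append : Q.IsPath (a ++ b) ↔ Q.IsPath a ∧ Q.IsPath b ∧ Q.Composable a b :=
  List.isChain_append

theorem IsPath.infix (h : Q.IsPath b) (hab : a <:+: b) : Q.IsPath a :=
  List.IsChain.infix h hab

theorem composable_append_left (hb : b ≠ []) :
    Q.Composable (a ++ b) c ↔ Q.Composable b c := by
  simp only [Composable, List.getLast?_append_of_ne_nil _ hb]

theorem composable_append_right (hb : b ≠ []) :
    Q.Composable a (b ++ c) ↔ Q.Composable a b := by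
  simp only [Composable, List.head?_append_of_ne_nil _ hb]

end QuiverData

namespace MonomialData

open QuiverData

variable {V E : Type} {M : MonomialData V E} {a b c d p r t t' x y : List E}

theorem IsZero.mono (h : M.IsZero a) (hab : a <:+: b) : M.IsZero b :=
  let ⟨f, hf, hfa⟩ := h
  ⟨f, hf, hfa.trans hab⟩

theorem Nonzero.of_infix (h : M.Nonzero b) (hab : a <:+: b) : M.Nonzero a :=
  ⟨h.1.infix hab, fun hz => h.2 (hz.mono hab)⟩

theorem Nonzero.composable (h : M.Nonzero (a ++ b)) : M.Composable a b :=
  (isPath_append.1 h.1).2.2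

theorem Nonzero.append (ha : M.Nonzero a) (hb : M.Nonzero b) (hab : M.Composable a b)
    (hz : ¬ M.IsZero (a ++ b)) : M.Nonzero (a ++ b) :=
  ⟨isPath_append.2 ⟨ha.1, hb.1, hab⟩, hz⟩

namespace PerfectPair

theorem left_ne_nil (h : M.PerfectPair a b) : a ≠ [] := h.1

theorem right_ne_nil (h : M.PerfectPair a b) : b ≠ [] := h.2.1

theorem nonzero_left (h : M.PerfectPair a b) : M.Nonzero a := h.2.2.1

theorem nonzero_right (h : M.PerfectPair a b) : M.Nonzero b := h.2.2.2.1

theorem composable (h : M.PerfectPair a b) : M.Composable a b := h.2.2.2.2.1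

theorem isZero (h : M.PerfectPair a b) : M.IsZero (a ++ b) := h.2.2.2.2.2.1

theorem prefix_of_isZero (h : M.PerfectPair a b) (hc : c ≠ []) (hcnz : M.Nonzero c)
    (hac : M.Composable a c) (hz : M.IsZero (a ++ c)) : b <+: c :=
  h.2.2.2.2.2.2.1 c hc hcnz hac hz

theorem suffix_of_isZero (h : M.PerfectPair a b) (hc : c ≠ []) (hcnz : M.Nonzero c)
    (hcb : M.Composable c b) (hz : M.IsZero (c ++ b)) : a <:+ c :=
  h.2.2.2.2.2.2.2 c hc hcnz hcb hz

theorem left_unique (h : M.PerfectPair a b) (h' : M.PerfectPair c b) : a = c :=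
  antisymm (h.suffix_of_isZero h'.left_ne_nil h'.nonzero_left h'.composable h'.isZero)
    (h'.suffix_of_isZero h.left_ne_nil h.nonzero_left h.composable h.isZero)

theorem not_prefix (h : M.PerfectPair a b) (hc : M.Nonzero (a ++ c)) : ¬ b <+: c :=
  fun hbc => hc.2 (h.isZero.mono ((List.prefix_append_right_inj a).2 hbc).isInfix)

theorem nonzero_append_of_suffix (h : M.PerfectPair (r ++ a) b) (hr : r ≠ []) (ha : a ≠ []) :
    M.Nonzero (a ++ b) := by
  have hanz : M.Nonzero a := h.nonzero_left.of_infix (List.suffix_append r a).isInfix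
  have hab : M.Composable a b := (composable_append_left ha).1 h.composable
  refine hanz.append h.nonzero_right hab fun hz => hr ?_
  simpa using (h.suffix_of_isZero ha hanz hab hz).length_le

theorem right_eq_append (hp : M.PerfectPair p y) (hq : M.PerfectPair (p ++ r) x)
    (hr : r ≠ []) : y = r ++ x := by
  have hrx : M.Nonzero (r ++ x) := hq.nonzero_append_of_suffix hp.left_ne_nil hr
  have hyrx : y <+: r ++ x := hp.prefix_of_isZero (by simp [hr]) hrx
    ((composable_append_right hr).2 hq.nonzero_left.composable) (by simpa using hq.isZero)
  obtain hyr | ⟨z, rfl⟩ := List.prefix_or_prefix_of_prefix hyrx (List.prefix_append r x)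
  · exact absurd hyr (hp.not_prefix hq.nonzero_left)
  have hz : z ≠ [] := by
    rintro rfl
    exact hp.not_prefix hq.nonzero_left (by simp)
  have hzx : z <+: x := (List.prefix_append_right_inj r).1 hyrx
  have hxz : x <+: z := hq.prefix_of_isZero hz (hq.nonzero_right.of_infix hzx.isInfix)
    ((composable_append_left hr).2 hp.nonzero_right.composable) (by simpa using hp.isZero)
  rw [antisymm hzx hxz]

theorem exists_right_eq_append (h : M.PerfectPair (r ++ a) b) (h' : M.PerfectPair a c)
    (hr : r ≠ []) : ∃ d, d ≠ [] ∧ c = b ++ d := by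
  obtain ⟨d, rfl⟩ : b <+: c := h.prefix_of_isZero h'.right_ne_nil h'.nonzero_right
    ((composable_append_left h'.left_ne_nil).2 h'.composable)
    (by simpa using h'.isZero.mono (List.infix_append r (a ++ c) []))
  refine ⟨d, ?_, rfl⟩
  rintro rfl
  exact (h.nonzero_append_of_suffix hr h'.left_ne_nil).2 (by simpa using h'.isZero)

end PerfectPair

-- The pair `(cₖ, q₂ₖ₊₁ p₂ₖ₊₂)`, for `a = p₂ₖ`, `r = cₖ`, `b = q₂ₖ₊₁`, `c = p₂ₖ₊₂`.
theorem perfectPair_overhang_append (ha : M.PerfectPair a (r ++ b))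
    (hrb : M.PerfectPair (r ++ b) c) (har : M.PerfectPair (a ++ r) b) (hr : r ≠ []) :
    M.PerfectPair r (b ++ c) := by
  have hb := har.right_ne_nil
  have hbc : M.Nonzero (b ++ c) := hrb.nonzero_append_of_suffix hr hb
  refine ⟨hr, by simp [hb], har.nonzero_left.of_infix (List.suffix_append a r).isInfix, hbc,
    (composable_append_right hb).2 ha.nonzero_right.composable,
    by simpa using hrb.isZero, ?_, ?_⟩
  · intro z hz hznz hrz hzero
    obtain ⟨z', rfl⟩ : b <+: z := har.prefix_of_isZero hz hznz
      ((composable_append_left hr).2 hrz) (by simpa using hzero.mono (List.infix_append a _ []))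
    have hz' : z' ≠ [] := by
      rintro rfl
      exact ha.nonzero_right.2 (by simpa using hzero)
    exact (List.prefix_append_right_inj b).2 <| hrb.prefix_of_isZero hz'
      (hznz.of_infix (List.suffix_append b z').isInfix)
      ((composable_append_left hb).2 hznz.composable) (by simpa using hzero)
  · intro w hw hwnz hwbc hzero
    have hwb : M.Composable w b := (composable_append_right hb).1 hwbc
    by_cases hwbz : M.IsZero (w ++ b)
    · exact (List.suffix_append a r).trans (har.suffix_of_isZero hw hwnz hwb hwbz)
    · exact List.suffix_append_self_iff.1 <| hrb.suffix_of_isZero (by simp [hw])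
        (hwnz.append har.nonzero_right hwb hwbz)
        ((composable_append_left hb).2 hbc.composable) (by simpa using hzero)

-- The pair `(q₂ₖ₊₁ p₂ₖ₊₂, cₖ₊₁)`, for `r = cₖ`, `b = q₂ₖ₊₁`, `c = p₂ₖ₊₂`, `d = cₖ₊₁`.
theorem perfectPair_append_overhang (hrb : M.PerfectPair (r ++ b) c)
    (hc : M.PerfectPair c (d ++ x)) (hb : M.PerfectPair b (c ++ d)) (hr : r ≠ []) (hd : d ≠ []) :
    M.PerfectPair (b ++ c) d := by
  have hc0 := hrb.right_ne_nil
  have hbc : M.Composable b c := (composable_append_right hc0).1 hb.composable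
  refine ⟨by simp [hb.left_ne_nil], hd, hrb.nonzero_append_of_suffix hr hb.left_ne_nil,
    hb.nonzero_right.of_infix (List.suffix_append c d).isInfix,
    (composable_append_left hc0).2 hb.nonzero_right.composable,
    by simpa using hb.isZero, ?_, ?_⟩
  · intro z hz hznz hbcz hzero
    have hcz : M.Composable c z := (composable_append_left hc0).1 hbcz
    by_cases hczz : M.IsZero (c ++ z)
    · exact (List.prefix_append d x).trans (hc.prefix_of_isZero hz hznz hcz hczz)
    · exact (List.prefix_append_right_inj c).1 <| hb.prefix_of_isZero (by simp [hz])
        (hc.nonzero_left.append hznz hcz hczz)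
        ((composable_append_right hc0).2 hbc) (by simpa using hzero)
  · intro w hw hwnz hwd hzero
    obtain ⟨v, rfl⟩ : c <:+ w := hc.suffix_of_isZero hw hwnz
      ((composable_append_right hd).2 hwd)
      (by simpa using hzero.mono (List.prefix_append _ x).isInfix)
    have hv : v ≠ [] := by
      rintro rfl
      exact hb.nonzero_right.2 hzero
    exact List.suffix_append_self_iff.2 <| hb.suffix_of_isZero hv
      (hwnz.of_infix (List.prefix_append v c).isInfix)
      ((composable_append_right hc0).2 hwnz.composable) (by simpa using hzero)

theorem isPerfect_of_periodic {n : ℕ} {s : ℕ → List E} (hn : 0 < n) (hs : Function.Periodic s n)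
    (hpair : ∀ i, M.PerfectPair (s i) (s (i + 1))) (j : ℕ) : M.IsPerfect (s j) :=
  ⟨n, fun i => s (i + j), hn, by simp, fun i => by simpa [Nat.add_right_comm] using hs (i + j),
    fun i => by simpa [Nat.add_right_comm] using hpair (i + j)⟩

theorem isPerfect_of_interleave {n : ℕ} {a b : ℕ → List E} (hn : 0 < n)
    (ha : Function.Periodic a n) (hb : Function.Periodic b n)
    (hab : ∀ k, M.PerfectPair (a k) (b k)) (hba : ∀ k, M.PerfectPair (b k) (a (k + 1))) :
    M.IsPerfect (a 0) := by
  refine ⟨2 * n, fun i => if Even i then a (i / 2) else b (i / 2), by omega, by simp,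
    fun i => ?_, fun i => ?_⟩
  · have : (i + 2 * n) / 2 = i / 2 + n := by omega
    simp [Nat.even_add, this, ha _, hb _]
  · rcases Nat.even_or_odd' i with ⟨k, rfl | rfl⟩
    · simpa [Nat.even_add_one, show (2 * k + 1) / 2 = k by omega] using hab k
    · simpa [Nat.even_add_one, show (2 * k + 1) / 2 = k by omega,
        show (2 * k + 1 + 1) / 2 = k + 1 by omega] using hba k

theorem exists_overhang {P Q : ℕ → List E} (hP : ∀ i, M.PerfectPair (P i) (P (i + 1)))
    (hQ : ∀ i, M.PerfectPair (Q i) (Q (i + 1))) (h0 : Q 0 = P 0 ++ r) (hr : r ≠ []) (k : ℕ) :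
    ∃ c, c ≠ [] ∧ Q (2 * k) = P (2 * k) ++ c := by
  induction k with
  | zero => exact ⟨r, hr, h0⟩
  | succ k ih =>
    obtain ⟨c, hc, hQc⟩ := ih
    have hPc : P (2 * k + 1) = c ++ Q (2 * k + 1) :=
      (hP (2 * k)).right_eq_append (hQc ▸ hQ (2 * k)) hc
    exact (hPc ▸ hP (2 * k + 1)).exists_right_eq_append (hQ (2 * k + 1)) hc

namespace IsPerfect

theorem ne_nil (h : M.IsPerfect a) : a ≠ [] :=
  let ⟨_, _, _, h0, _, hpair⟩ := h
  h0 ▸ (hpair 0).left_ne_nil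

theorem exists_perfectPair (h : M.IsPerfect a) : ∃ b, M.PerfectPair a b ∧ M.IsPerfect b :=
  let ⟨_, s, hn, h0, hs, hpair⟩ := h
  ⟨s 1, h0 ▸ hpair 0, isPerfect_of_periodic hn hs hpair 1⟩

theorem of_perfectPair (hab : M.PerfectPair a b) (hb : M.IsPerfect b) : M.IsPerfect a := by
  obtain ⟨n, s, hn, rfl, hs, hpair⟩ := hb
  have hlast : M.PerfectPair (s (n - 1)) (s 0) := by
    simpa [Nat.sub_add_cancel hn, ← hs 0] using hpair (n - 1)
  rw [hab.left_unique hlast]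
  exact isPerfect_of_periodic hn hs hpair _

theorem right_of_append (hp : M.IsPerfect p) (hpr : M.IsPerfect (p ++ r)) (hr : r ≠ []) :
    M.IsPerfect r := by
  obtain ⟨m, P, hm, rfl, hPm, hP⟩ := hp
  obtain ⟨n, Q, hn, hQ0, hQn, hQ⟩ := hpr
  choose c hc hQc using exists_overhang hP hQ hQ0 hr
  have hPc (k : ℕ) : P (2 * k + 1) = c k ++ Q (2 * k + 1) :=
    (hP (2 * k)).right_eq_append (hQc k ▸ hQ (2 * k)) (hc k)
  have hPmn : Function.Periodic P (2 * (m * n)) := by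
    simpa [mul_comm, mul_left_comm, mul_assoc] using Function.Periodic.nat_mul hPm (2 * n)
  have hQmn : Function.Periodic Q (2 * (m * n)) := by
    simpa [mul_comm, mul_left_comm, mul_assoc] using Function.Periodic.nat_mul hQn (2 * m)
  have hcmn : Function.Periodic c (m * n) := fun k => by
    have := hQc (k + m * n)
    rw [mul_add, hPmn, hQmn, hQc k] at this
    exact (List.append_cancel_left this).symm
  have hc0 : c 0 = r := List.append_cancel_left ((hQc 0).symm.trans hQ0)
  subst hc0
  refine isPerfect_of_interleave (b := fun k => Q (2 * k + 1) ++ P (2 * k + 2))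
    (Nat.mul_pos hm hn) hcmn (fun k => ?_) (fun k => ?_) (fun k => ?_)
  · simp only [mul_add, add_right_comm _ (2 * (m * n)), hPmn _, hQmn _]
  · exact perfectPair_overhang_append (hPc k ▸ hP (2 * k)) (hPc k ▸ hP (2 * k + 1))
      (hQc k ▸ hQ (2 * k)) (hc k)
  · exact perfectPair_append_overhang (hPc k ▸ hP (2 * k + 1)) (hPc (k + 1) ▸ hP (2 * k + 2))
      (hQc (k + 1) ▸ hQ (2 * k + 1)) (hc k) (hc (k + 1))

end IsPerfect

theorem perfectPair_prefix_append (hp : M.PerfectPair p (t ++ (t' ++ x)))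
    (hq : M.PerfectPair (p ++ t ++ t') x) (ht : M.PerfectPair t (t' ++ x ++ y)) (ht' : t' ≠ []) :
    M.PerfectPair (p ++ t) (t' ++ x) := by
  have hpt : M.Nonzero (p ++ t ++ t') := hq.nonzero_left
  have htx : M.Nonzero (t' ++ x) := hp.nonzero_right.of_infix (List.suffix_append t _).isInfix
  have hp0 : M.Nonzero (p ++ t) := hpt.of_infix (List.prefix_append _ t').isInfix
  refine ⟨by simp [hp.left_ne_nil], by simp [ht'], hp0, htx,
    (composable_append_right ht').2 hpt.composable, by simpa using hq.isZero, ?_, ?_⟩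
  · intro z hz hznz hptz hzero
    have htz : M.Composable t z := (composable_append_left ht.left_ne_nil).1 hptz
    by_cases htzz : M.IsZero (t ++ z)
    · exact (List.prefix_append _ y).trans (ht.prefix_of_isZero hz hznz htz htzz)
    · simpa using hp.prefix_of_isZero (by simp [ht.left_ne_nil])
        (ht.nonzero_left.append hznz htz htzz)
        ((composable_append_right ht.left_ne_nil).2 hp0.composable) (by simpa using hzero)
  · intro w hw hwnz hwtx hzero
    have hwt' : M.Composable w t' := (composable_append_right ht').1 hwtx
    by_cases hwtz : M.IsZero (w ++ t')
    · obtain ⟨v, rfl⟩ : t <:+ w := ht.suffix_of_isZero hw hwnz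
        ((composable_append_right (by simp [ht'])).2 hwtx)
        (by simpa using hwtz.mono (List.prefix_append _ (x ++ y)).isInfix)
      have hv : v ≠ [] := by
        rintro rfl
        exact hpt.2 (hwtz.mono ⟨p, [], by simp⟩)
      exact List.suffix_append_self_iff.2 <| hp.suffix_of_isZero hv
        (hwnz.of_infix (List.prefix_append v t).isInfix)
        ((composable_append_right ht.left_ne_nil).2 hwnz.composable) (by simpa using hzero)
    · exact List.suffix_append_self_iff.1 <| hq.suffix_of_isZero (by simp [hw])
        (hwnz.append (htx.of_infix (List.prefix_append t' x).isInfix) hwt' hwtz)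
        ((composable_append_left ht').2 htx.composable) (by simpa using hzero)

namespace IsPerfect

theorem append_of_prefix (hp : M.IsPerfect p) (ht : M.IsPerfect t)
    (hq : M.IsPerfect (p ++ t ++ t')) (ht' : t' ≠ []) : M.IsPerfect (p ++ t) := by
  obtain ⟨p₁, hp₁, hp₁perf⟩ := hp.exists_perfectPair
  obtain ⟨p₂, hp₂, -⟩ := hp₁perf.exists_perfectPair
  obtain ⟨x, hx, -⟩ := hq.exists_perfectPair
  obtain ⟨t₁, ht₁, -⟩ := ht.exists_perfectPair
  obtain rfl : p₁ = t ++ (t' ++ x) := by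
    simpa using hp₁.right_eq_append (r := t ++ t') (by simpa using hx) (by simp [ht'])
  obtain rfl : t₁ = t' ++ x ++ p₂ := by
    simpa using ht₁.right_eq_append hp₂ (by simp [ht'])
  exact of_perfectPair (perfectPair_prefix_append hp₁ hx ht₁ ht')
    (ht.right_of_append hp₁perf (by simp [ht']))

end IsPerfect

theorem exists_isPerfect_between_iff (hp : M.IsPerfect p) (hpr : M.IsPerfect (p ++ r)) :
    (∃ s, M.IsPerfect s ∧ p <+: s ∧ p ≠ s ∧ s <+: p ++ r ∧ s ≠ p ++ r) ↔
      ∃ t, M.IsPerfect t ∧ t <+: r ∧ t ≠ r := by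
  constructor
  · rintro ⟨_, hs, ⟨t, rfl⟩, hpt, hsr, hsr'⟩
    exact ⟨t, hp.right_of_append hs (by simpa using hpt), (List.prefix_append_right_inj p).1 hsr,
      by simpa using hsr'⟩
  · rintro ⟨t, ht, ⟨t', rfl⟩, htr⟩
    exact ⟨p ++ t, hp.append_of_prefix ht (by simpa using hpr) (by simpa using htr),
      List.prefix_append p t, by simpa using ht.ne_nil.symm, by simp, by simpa using htr⟩

end MonomialData

/-- for perfect paths `p ≺ q` with factorization `q = pr`
(`r` nontrivial, hence perfect), there is an arrow `q ⟶ p` in the Hasse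
quiver of `(ℙ_Λ, ⪯)` iff `r` is co-elementary. -/
theorem hasseArrow_iff_coelementary {V E : Type} (M : MonomialData V E)
    (p q r : List E) (hp : M.IsPerfect p) (hq : M.IsPerfect q)
    (hfac : q = p ++ r) (hr : r ≠ []) :
    M.HasseArrowPrec q p ↔ M.CoElementary r := by
  subst hfac
  rw [MonomialData.HasseArrowPrec, MonomialData.CoElementary,
    MonomialData.exists_isPerfect_between_iff hp hq]
  simp [hp, hq, hr, hp.right_of_append hq hr]
end

section
/- Every perfect path p in a monomial algebra Λ admits a factorization p = r_1 r_2 ⋯ r_n into co-elementary perfect paths r_1, …, r_n, and this factorization is unique: if p = s_1 ⋯ s_m with all s_i co-elementary, then m = n and r_i = s_i for all i. -/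
namespace MonomialData
variable {V E : Type} {M : MonomialData V E}

lemma getLast?_append_of_ne_nil' {l l' : List E} (h : l' ≠ []) :
    (l ++ l').getLast? = l'.getLast? := by
  rw [List.getLast?_append]
  cases hl : l'.getLast? with
  | none => exact absurd (List.getLast?_eq_none_iff.mp hl) h
  | some a => rfl

lemma isZero_mono {m l : List E} (h : M.IsZero m) (hml : m <:+: l) : M.IsZero l :=
  let ⟨f, hf, hfm⟩ := h; ⟨f, hf, hfm.trans hml⟩

lemma nonzero_mono {l m : List E} (h : M.Nonzero l) (hml : m <:+: l) : M.Nonzero m :=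
  ⟨h.1.infix hml, fun hz => h.2 (isZero_mono hz hml)⟩

lemma nonzero_of_proper_infix {f g : List E} (hf : f ∈ M.F) (hg : g <:+: f)
    (hne : g ≠ f) : M.Nonzero g :=
  ⟨(M.F_path f hf).infix hg, fun ⟨f', hf', hf'g⟩ => hne (M.F_min f hf g hg ⟨f', hf', hf'g⟩)⟩

lemma composable_of_eq {x x' y y' : List E} (h : M.toQuiverData.Composable x y)
    (hx : x'.getLast? = x.getLast?) (hy : y'.head? = y.head?) :
    M.toQuiverData.Composable x' y' := fun a ha b hb => h a (hx ▸ ha) b (hy ▸ hb)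

lemma composable_of_isPath_append {x y : List E} (h : M.toQuiverData.IsPath (x ++ y)) :
    M.toQuiverData.Composable x y := (List.isChain_append.mp h).2.2

lemma isPath_append {x y : List E} (hx : M.toQuiverData.IsPath x)
    (hy : M.toQuiverData.IsPath y) (h : M.toQuiverData.Composable x y) :
    M.toQuiverData.IsPath (x ++ y) := List.isChain_append.mpr ⟨hx, hy, h⟩

/-- suffix cancel on the right -/
lemma suffix_cancel_right {l₁ l₂ m : List E} (h : l₁ ++ m <:+ l₂ ++ m) : l₁ <:+ l₂ := by
  obtain ⟨w, hw⟩ := h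
  exact ⟨w, List.append_cancel_right (by rw [← List.append_assoc] at hw; exact hw)⟩

lemma suffix_append_right {l₁ l₂ m : List E} (h : l₁ <:+ l₂) : l₁ ++ m <:+ l₂ ++ m := by
  obtain ⟨w, hw⟩ := h
  exact ⟨w, by rw [← hw, List.append_assoc]⟩

/-- the straddle lemma: an F-element inside `x ++ y` with `x, y` nonzero splits
across the junction. -/
lemma straddle {x y f : List E} (hx : ¬ M.IsZero x) (hy : ¬ M.IsZero y)
    (hfF : f ∈ M.F) (h : f <:+: x ++ y) :
    ∃ α β, f = α ++ β ∧ α ≠ [] ∧ β ≠ [] ∧ α <:+ x ∧ β <+: y := by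
  obtain ⟨u, v, huv⟩ := h
  have hiltx : u.length < x.length := by
    by_contra hle
    push_neg at hle
    have hux : x <+: u :=
      List.prefix_of_prefix_length_le ⟨y, rfl⟩ ⟨f ++ v, by rw [← huv, List.append_assoc]⟩ hle
    obtain ⟨u', hu'⟩ := hux
    apply hy
    refine ⟨f, hfF, u', v, ?_⟩
    apply List.append_cancel_left (as := x)
    rw [← List.append_assoc, ← List.append_assoc, hu', huv]
  have hxlt : x.length < u.length + f.length := by
    by_contra hle
    push_neg at hle
    have huf : u ++ f <+: x := by
      refine List.prefix_of_prefix_length_le ⟨v, huv⟩ ⟨y, rfl⟩ ?_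
      simpa using hle
    obtain ⟨w, hw⟩ := huf
    exact hx ⟨f, hfF, u, w, hw⟩
  set α := x.drop u.length with hα
  have hαlen : α.length = x.length - u.length := by simp [hα]
  have hfv : f ++ v = α ++ y := by
    have h1 : (u ++ (f ++ v)).drop u.length = (x ++ y).drop u.length := by
      rw [← List.append_assoc, huv]
    rw [List.drop_left] at h1
    rw [h1, List.drop_append, Nat.sub_eq_zero_of_le (le_of_lt hiltx),
      List.drop_zero]
  have hαf : α <+: f := by
    refine List.prefix_of_prefix_length_le ⟨y, hfv.symm⟩ ⟨v, rfl⟩ ?_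
    omega
  obtain ⟨β, hβ⟩ := hαf
  refine ⟨α, β, hβ.symm, ?_, ?_, List.drop_suffix _ _, ?_⟩
  · intro hnil
    rw [hnil] at hαlen
    simp at hαlen
    omega
  · intro hnil
    have := congrArg List.length hβ
    rw [hnil] at this
    simp at this
    omega
  · have : (α ++ β) ++ v = α ++ y := by rw [hβ, hfv]
    rw [List.append_assoc] at this
    exact ⟨v, List.append_cancel_left this⟩

/-- the dual decomposition: a long suffix of `x ++ y` splits -/
lemma suffix_split {α x y : List E} (h : α <:+ x ++ y) (hlen : y.length ≤ α.length) :
    ∃ α', α = α' ++ y ∧ α' <:+ x := by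
  obtain ⟨w, hw⟩ := h
  have hwx : w.length ≤ x.length := by
    have := congrArg List.length hw
    simp at this; omega
  have h1 : α = x.drop w.length ++ y := by
    have h2 : (w ++ α).drop w.length = (x ++ y).drop w.length := by rw [hw]
    rw [List.drop_left] at h2
    rw [h2, List.drop_append, Nat.sub_eq_zero_of_le hwx, List.drop_zero]
  exact ⟨x.drop w.length, h1, List.drop_suffix _ _⟩

namespace PerfectPair
variable {p q : List E}
lemma left_ne (h : M.PerfectPair p q) : p ≠ [] := h.1
lemma right_ne (h : M.PerfectPair p q) : q ≠ [] := h.2.1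
lemma left_nz (h : M.PerfectPair p q) : M.Nonzero p := h.2.2.1
lemma right_nz (h : M.PerfectPair p q) : M.Nonzero q := h.2.2.2.1
lemma comp (h : M.PerfectPair p q) : M.toQuiverData.Composable p q := h.2.2.2.2.1
lemma zero (h : M.PerfectPair p q) : M.IsZero (p ++ q) := h.2.2.2.2.2.1
lemma minQ (h : M.PerfectPair p q) : ∀ q', q' ≠ [] → M.Nonzero q' →
    M.toQuiverData.Composable p q' → M.IsZero (p ++ q') → q <+: q' := h.2.2.2.2.2.2.1
lemma minP (h : M.PerfectPair p q) : ∀ p', p' ≠ [] → M.Nonzero p' →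
    M.toQuiverData.Composable p' q → M.IsZero (p' ++ q) → p <:+ p' := h.2.2.2.2.2.2.2
end PerfectPair

/-- key structural lemma: the concatenation of a perfect pair is a minimal
zero relation. -/
lemma pair_mem_F {p q : List E} (h : M.PerfectPair p q) : p ++ q ∈ M.F := by
  obtain ⟨f, hfF, hfinf⟩ := h.zero
  obtain ⟨α, β, hαβ, hαne, hβne, hαs, hβp⟩ := straddle h.left_nz.2 h.right_nz.2 hfF hfinf
  have hfpath : M.toQuiverData.IsPath f := M.F_path f hfF
  have hcompαβ : M.toQuiverData.Composable α β :=
    composable_of_isPath_append (hαβ ▸ hfpath)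
  -- α = p
  have hαp : α = p := by
    have hps : p <:+ α := by
      have hlast : α.getLast? = p.getLast? := by
        obtain ⟨w, hw⟩ := hαs
        rw [← hw]
        exact (getLast?_append_of_ne_nil' hαne).symm
      refine h.minP α hαne (nonzero_mono h.left_nz hαs.isInfix) ?_ ?_
      · exact composable_of_eq h.comp hlast rfl
      · exact ⟨f, hfF, hαβ ▸ ((List.prefix_append_right_inj α).mpr hβp).isInfix⟩
    exact hαs.eq_of_length (le_antisymm hαs.length_le hps.length_le)
  -- β = q
  have hβq : β = q := by
    have hqp : q <+: β := by
      refine h.minQ β hβne (nonzero_mono h.right_nz hβp.isInfix) ?_ ?_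
      · refine composable_of_eq h.comp rfl ?_
        obtain ⟨w, hw⟩ := hβp
        rw [← hw]; exact (List.head?_append_of_ne_nil β hβne).symm
      · exact ⟨f, hfF, by rw [hαβ, hαp]⟩
    exact hβp.eq_of_length (le_antisymm hβp.length_le hqp.length_le)
  rw [hαβ, hαp, hβq] at hfF
  exact hfF

lemma pair_right_unique {p q q' : List E} (h : M.PerfectPair p q)
    (h' : M.PerfectPair p q') : q = q' := by
  have h1 : q <+: q' := h.minQ q' h'.right_ne h'.right_nz h'.comp h'.zero
  have h2 : q' <+: q := h'.minQ q h.right_ne h.right_nz h.comp h.zero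
  exact h1.eq_of_length (le_antisymm h1.length_le h2.length_le)

lemma perfect_ne_nil {p : List E} (h : M.IsPerfect p) : p ≠ [] := by
  obtain ⟨n, s, hn, h0, hper, hpair⟩ := h
  exact h0 ▸ (hpair 0).left_ne

end MonomialData
namespace MonomialData
variable {V E : Type} {M : MonomialData V E}

lemma drop_perfect {p r : List E} (hp : M.IsPerfect p) (hr : M.IsPerfect r)
    (hpref : r <+: p) (hne : r ≠ p) : M.IsPerfect (p.drop r.length) := by
  classical
  obtain ⟨n, b, hn, hb0, hbper, hbpair⟩ := hp
  obtain ⟨m, a, hm, ha0, haper, hapair⟩ := hr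
  have ane : ∀ i, a i ≠ [] := fun i => (hapair i).left_ne
  have bne : ∀ i, b i ≠ [] := fun i => (hbpair i).left_ne
  have anz : ∀ i, M.Nonzero (a i) := fun i => (hapair i).left_nz
  have bnz : ∀ i, M.Nonzero (b i) := fun i => (hbpair i).left_nz
  have aF : ∀ i, a i ++ a (i+1) ∈ M.F := fun i => pair_mem_F (hapair i)
  have bF : ∀ i, b i ++ b (i+1) ∈ M.F := fun i => pair_mem_F (hbpair i)
  have aper' : ∀ c i, a (i + c * m) = a i := by
    intro c
    induction c with
    | zero => simp
    | succ c ih =>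
      intro i
      have h1 : i + (c+1) * m = (i + c * m) + m := by ring
      rw [h1, haper, ih]
  have bper' : ∀ c i, b (i + c * n) = b i := by
    intro c
    induction c with
    | zero => simp
    | succ c ih =>
      intro i
      have h1 : i + (c+1) * n = (i + c * n) + n := by ring
      rw [h1, hbper, ih]
  have prop : ∀ j k, a j = b j → a (j + k) = b (j + k) := by
    intro j k
    induction k with
    | zero => exact fun h => h
    | succ k ih =>
      intro h
      have h1 := ih h
      have h2 := hbpair (j+k)
      rw [← h1] at h2
      have h3 := pair_right_unique (hapair (j+k)) h2
      have h4 : j + (k+1) = j + k + 1 := by ring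
      rw [h4, h3]
  have anb : ∀ j, a j ≠ b j := by
    intro j h
    set K := m*n*(j+1) with hK
    have hjK : j ≤ K := by
      have h3 : 0 < m*n := Nat.mul_pos hm hn
      have h4 : j + 1 ≤ m*n*(j+1) := Nat.le_mul_of_pos_left _ h3
      omega
    have heq : a K = b K := by
      have := prop j (K - j) h
      rwa [Nat.add_sub_cancel' hjK] at this
    have haK : a K = r := by
      rw [show K = 0 + (n*(j+1))*m by rw [hK]; ring, aper', ha0]
    have hbK : b K = p := by
      rw [show K = 0 + (m*(j+1))*n by rw [hK]; ring, bper', hb0]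
    rw [haK, hbK] at heq
    exact hne heq
  -- the two-step invariant
  have step : ∀ j, a (2*j) <+: b (2*j) →
      (∃ t, a (2*j) ++ t = b (2*j) ∧ t ≠ [] ∧ a (2*j+1) = t ++ b (2*j+1)) ∧
        a (2*(j+1)) <+: b (2*(j+1)) := by
    intro j hpre
    set t := (b (2*j)).drop (a (2*j)).length with ht
    have hAB : a (2*j) ++ t = b (2*j) := List.prefix_iff_eq_append.mp hpre
    have hTne : t ≠ [] := by
      intro h
      apply anb (2*j)
      rw [← hAB, h, List.append_nil]
    have hcompAT : M.toQuiverData.Composable (a (2*j)) t :=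
      composable_of_isPath_append (hAB ▸ (bnz (2*j)).1)
    have hcomp1 : M.toQuiverData.Composable (a (2*j)) (t ++ b (2*j+1)) :=
      composable_of_eq hcompAT rfl (List.head?_append_of_ne_nil _ hTne)
    have hzero1 : M.IsZero (a (2*j) ++ (t ++ b (2*j+1))) :=
      ⟨_, bF (2*j), by rw [← List.append_assoc, hAB]⟩
    have hnz1 : M.Nonzero (t ++ b (2*j+1)) := by
      refine nonzero_of_proper_infix (bF (2*j)) ?_ ?_
      · rw [← hAB, List.append_assoc]
        exact (List.suffix_append _ _).isInfix
      · intro h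
        have h2 : t = b (2*j) := List.append_cancel_right h
        have h3 := hAB
        rw [h2] at h3
        exact ane (2*j) (List.append_left_eq_self.mp h3)
    have hA1pre : a (2*j+1) <+: t ++ b (2*j+1) :=
      (hapair (2*j)).minQ _ (by simp [hTne]) hnz1 hcomp1 hzero1
    have hodd : a (2*j+1) = t ++ b (2*j+1) := by
      have h1 : a (2*j) ++ a (2*j+1) <+: b (2*j) ++ b (2*j+1) := by
        rw [← hAB, List.append_assoc]
        exact (List.prefix_append_right_inj _).mpr hA1pre
      have h2 : a (2*j) ++ a (2*j+1) = b (2*j) ++ b (2*j+1) :=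
        M.F_min _ (bF (2*j)) _ h1.isInfix ⟨_, aF (2*j), List.infix_refl _⟩
      apply List.append_cancel_left (as := a (2*j))
      rw [h2, ← hAB, List.append_assoc]
    have hnext : a (2*j+1+1) <+: b (2*j+1+1) := by
      have hcomp2 : M.toQuiverData.Composable (a (2*j+1)) (b (2*j+1+1)) := by
        refine composable_of_eq ((hbpair (2*j+1)).comp) ?_ rfl
        rw [hodd]
        exact getLast?_append_of_ne_nil' (bne _)
      have hzero2 : M.IsZero (a (2*j+1) ++ b (2*j+1+1)) := by
        refine ⟨_, bF (2*j+1), ?_⟩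
        rw [hodd, List.append_assoc]
        exact (List.suffix_append _ _).isInfix
      exact (hapair (2*j+1)).minQ _ (bne _) (bnz _) hcomp2 hzero2
    refine ⟨⟨t, hAB, hTne, hodd⟩, ?_⟩
    rw [show 2*(j+1) = 2*j+1+1 by ring]
    exact hnext
  have pref : ∀ j, a (2*j) <+: b (2*j) := by
    intro j
    induction j with
    | zero => simpa [ha0, hb0] using hpref
    | succ j ih => exact (step j ih).2
  have inv : ∀ j, ∃ t, a (2*j) ++ t = b (2*j) ∧ t ≠ [] ∧ a (2*j+1) = t ++ b (2*j+1) :=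
    fun j => (step j (pref j)).1
  choose T hAB hTne hodd using inv
  have hTsuf : ∀ j, T j <:+ b (2*j) := fun j => ⟨a (2*j), hAB j⟩
  have hTnz : ∀ j, M.Nonzero (T j) := fun j => nonzero_mono (bnz _) (hTsuf j).isInfix
  -- normalized facts at level j+1
  have hAB2 : ∀ j, a (2*j+2) ++ T (j+1) = b (2*j+2) := by
    intro j
    have h1 := hAB (j+1)
    rwa [show 2*(j+1) = 2*j+2 by ring] at h1
  have hodd2 : ∀ j, a (2*j+2+1) = T (j+1) ++ b (2*j+2+1) := by
    intro j
    have h1 := hodd (j+1)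
    rwa [show 2*(j+1)+1 = 2*j+2+1 by ring] at h1
  have hnzBA : ∀ j, M.Nonzero (b (2*j+1) ++ a (2*j+2)) := by
    intro j
    refine nonzero_of_proper_infix (bF (2*j+1)) ?_ ?_
    · have h1 : b (2*j+1) ++ b (2*j+1+1) = (b (2*j+1) ++ a (2*j+2)) ++ T (j+1) := by
        rw [List.append_assoc, hAB2]
      rw [h1]
      exact (List.prefix_append _ _).isInfix
    · intro h
      apply anb (2*j+2)
      have h2 : b (2*j+1) ++ a (2*j+2) = b (2*j+1) ++ b (2*j+2) := h
      exact List.append_cancel_left h2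
  -- pair 1 : (T j, b (2*j+1) ++ a (2*j+2))
  have pair₁ : ∀ j, M.PerfectPair (T j) (b (2*j+1) ++ a (2*j+2)) := by
    intro j
    have hlastT : (T j).getLast? = (b (2*j)).getLast? := by
      conv_rhs => rw [← hAB j]
      exact (getLast?_append_of_ne_nil' (hTne j)).symm
    refine ⟨hTne j, by simp [bne (2*j+1)], hTnz j, hnzBA j, ?_, ?_, ?_, ?_⟩
    · exact composable_of_eq ((hbpair (2*j)).comp) hlastT
        (List.head?_append_of_ne_nil _ (bne (2*j+1)))
    · refine ⟨_, aF (2*j+1), ?_⟩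
      rw [hodd j, List.append_assoc]
    · -- minQ
      intro q' hq'ne hq'nz hq'comp hq'zero
      have hq'zero' := hq'zero
      obtain ⟨f, hfF, hfinf⟩ := hq'zero'
      obtain ⟨α, β, hαβ, hαne, hβne, hαs, hβp⟩ :=
        straddle (hTnz j).2 hq'nz.2 hfF hfinf
      have hcαβ : M.toQuiverData.Composable α β :=
        composable_of_isPath_append (hαβ ▸ M.F_path f hfF)
      have hαB : α <:+ b (2*j) := hαs.trans (hTsuf j)
      have hlastα : (b (2*j)).getLast? = α.getLast? := by
        obtain ⟨w, hw⟩ := hαB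
        rw [← hw]
        exact getLast?_append_of_ne_nil' hαne
      have hzBβ : M.IsZero (b (2*j) ++ β) := by
        obtain ⟨w, hw⟩ := hαB
        refine ⟨f, hfF, ?_⟩
        rw [hαβ, ← hw, List.append_assoc]
        exact (List.suffix_append _ _).isInfix
      have hB1β : b (2*j+1) <+: β :=
        (hbpair (2*j)).minQ β hβne (nonzero_mono hq'nz hβp.isInfix)
          (composable_of_eq hcαβ hlastα rfl) hzBβ
      have hB1q' : b (2*j+1) <+: q' := hB1β.trans hβp
      have hq'eq : b (2*j+1) ++ q'.drop (b (2*j+1)).length = q' :=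
        List.prefix_iff_eq_append.mp hB1q'
      set δ := q'.drop (b (2*j+1)).length with hδ
      have hδne : δ ≠ [] := by
        intro h
        rw [h, List.append_nil] at hq'eq
        rw [← hq'eq] at hq'zero
        rw [← hodd j] at hq'zero
        exact (anz (2*j+1)).2 hq'zero
      have hδnz : M.Nonzero δ := nonzero_mono hq'nz (List.drop_suffix _ _).isInfix
      have hcompA1δ : M.toQuiverData.Composable (a (2*j+1)) δ := by
        have hpath : M.toQuiverData.IsPath (b (2*j+1) ++ δ) := by
          rw [hq'eq]; exact hq'nz.1
        refine composable_of_eq (composable_of_isPath_append hpath) ?_ rfl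
        rw [hodd j]
        exact getLast?_append_of_ne_nil' (bne _)
      have hzA1δ : M.IsZero (a (2*j+1) ++ δ) := by
        rw [hodd j, List.append_assoc, hq'eq]
        exact hq'zero
      have hA2δ : a (2*j+1+1) <+: δ :=
        (hapair (2*j+1)).minQ δ hδne hδnz hcompA1δ hzA1δ
      rw [← hq'eq]
      exact (List.prefix_append_right_inj _).mpr hA2δ
    · -- minP
      intro p' hp'ne hp'nz hp'comp hp'zero
      obtain ⟨f, hfF, hfinf⟩ := hp'zero
      obtain ⟨α, β, hαβ, hαne, hβne, hαs, hβp⟩ :=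
        straddle hp'nz.2 (hnzBA j).2 hfF hfinf
      have hcαβ : M.toQuiverData.Composable α β :=
        composable_of_isPath_append (hαβ ▸ M.F_path f hfF)
      by_cases hc : β.length ≤ (b (2*j+1)).length
      · have hβB1 : β <+: b (2*j+1) :=
          List.prefix_of_prefix_length_le hβp (List.prefix_append _ _) hc
        have hheadβ : (b (2*j+1)).head? = β.head? := by
          obtain ⟨w, hw⟩ := hβB1
          rw [← hw]
          exact List.head?_append_of_ne_nil _ hβne
        have hzαB1 : M.IsZero (α ++ b (2*j+1)) :=
          ⟨f, hfF, by rw [hαβ]; exact ((List.prefix_append_right_inj α).mpr hβB1).isInfix⟩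
        have hBα : b (2*j) <:+ α :=
          (hbpair (2*j)).minP α hαne (nonzero_mono hp'nz hαs.isInfix)
            (composable_of_eq hcαβ rfl hheadβ) hzαB1
        exact ((hTsuf j).trans hBα).trans hαs
      · push_neg at hc
        have hB1β : b (2*j+1) <+: β :=
          List.prefix_of_prefix_length_le (List.prefix_append _ _) hβp (le_of_lt hc)
        have hβeq : b (2*j+1) ++ β.drop (b (2*j+1)).length = β :=
          List.prefix_iff_eq_append.mp hB1β
        set γ := β.drop (b (2*j+1)).length with hγ
        have hγne : γ ≠ [] := by
          intro h
          rw [h, List.append_nil] at hβeq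
          have := congrArg List.length hβeq
          omega
        have hγA2 : γ <+: a (2*j+2) := by
          have h1 : b (2*j+1) ++ γ <+: b (2*j+1) ++ a (2*j+2) := by
            rw [hβeq]; exact hβp
          exact (List.prefix_append_right_inj _).mp h1
        have hfeq : f = (α ++ b (2*j+1)) ++ γ := by
          rw [hαβ, ← hβeq, List.append_assoc]
        have hYnz : M.Nonzero (α ++ b (2*j+1)) := by
          refine nonzero_of_proper_infix hfF ?_ ?_
          · rw [hfeq]
            exact (List.prefix_append _ _).isInfix
          · intro h
            rw [hfeq] at h
            exact hγne (List.append_right_eq_self.mp h.symm)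
        have hheadγ : (a (2*j+2)).head? = γ.head? := by
          obtain ⟨w, hw⟩ := hγA2
          rw [← hw]
          exact List.head?_append_of_ne_nil _ hγne
        have hcompYA2 : M.toQuiverData.Composable (α ++ b (2*j+1)) (a (2*j+2)) := by
          have h1 := composable_of_isPath_append (hfeq ▸ M.F_path f hfF)
          exact composable_of_eq h1 rfl hheadγ
        have hzYA2 : M.IsZero ((α ++ b (2*j+1)) ++ a (2*j+2)) :=
          ⟨f, hfF, by rw [hfeq]; exact ((List.prefix_append_right_inj _).mpr hγA2).isInfix⟩
        have hA1Y : a (2*j+1) <:+ α ++ b (2*j+1) :=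
          (hapair (2*j+1)).minP _ (by simp [hαne]) hYnz hcompYA2 hzYA2
        rw [hodd j] at hA1Y
        exact (suffix_cancel_right hA1Y).trans hαs
  -- pair 2 : (b (2*j+1) ++ a (2*j+2), T (j+1))
  have pair₂ : ∀ j, M.PerfectPair (b (2*j+1) ++ a (2*j+2)) (T (j+1)) := by
    intro j
    have hTsuf2 : T (j+1) <:+ b (2*j+2) := ⟨a (2*j+2), hAB2 j⟩
    have hTnz2 : M.Nonzero (T (j+1)) := nonzero_mono (bnz (2*j+2)) hTsuf2.isInfix
    refine ⟨by simp [bne (2*j+1)], hTne (j+1), hnzBA j, hTnz2, ?_, ?_, ?_, ?_⟩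
    · have hcompAT : M.toQuiverData.Composable (a (2*j+2)) (T (j+1)) :=
        composable_of_isPath_append ((hAB2 j) ▸ (bnz (2*j+2)).1)
      exact composable_of_eq hcompAT (getLast?_append_of_ne_nil' (ane (2*j+2))) rfl
    · refine ⟨_, bF (2*j+1), ?_⟩
      rw [List.append_assoc, hAB2 j]
    · -- minQ
      intro q' hq'ne hq'nz hq'comp hq'zero
      obtain ⟨f, hfF, hfinf⟩ := hq'zero
      obtain ⟨α, β, hαβ, hαne, hβne, hαs, hβp⟩ :=
        straddle (hnzBA j).2 hq'nz.2 hfF hfinf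
      have hcαβ : M.toQuiverData.Composable α β :=
        composable_of_isPath_append (hαβ ▸ M.F_path f hfF)
      by_cases hc : α.length ≤ (a (2*j+2)).length
      · have hαA2 : α <:+ a (2*j+2) :=
          List.suffix_of_suffix_length_le hαs (List.suffix_append _ _) hc
        have hlast : (a (2*j+2)).getLast? = α.getLast? := by
          obtain ⟨w, hw⟩ := hαA2
          rw [← hw]
          exact getLast?_append_of_ne_nil' hαne
        have hz : M.IsZero (a (2*j+2) ++ β) := by
          obtain ⟨w, hw⟩ := hαA2
          refine ⟨f, hfF, ?_⟩
          rw [hαβ, ← hw, List.append_assoc]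
          exact (List.suffix_append _ _).isInfix
        have h3 : a (2*j+2+1) <+: β :=
          (hapair (2*j+2)).minQ β hβne (nonzero_mono hq'nz hβp.isInfix)
            (composable_of_eq hcαβ hlast rfl) hz
        have h4 : T (j+1) <+: a (2*j+2+1) := ⟨b (2*j+2+1), (hodd2 j).symm⟩
        exact (h4.trans h3).trans hβp
      · push_neg at hc
        obtain ⟨α', hα'eq, hα's⟩ := suffix_split hαs (le_of_lt hc)
        have hα'ne : α' ≠ [] := by
          intro h
          rw [h, List.nil_append] at hα'eq
          have := congrArg List.length hα'eq
          omega
        have hfeq : f = α' ++ (a (2*j+2) ++ β) := by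
          rw [hαβ, hα'eq, List.append_assoc]
        have hnzq'' : M.Nonzero (a (2*j+2) ++ β) := by
          refine nonzero_of_proper_infix hfF ?_ ?_
          · rw [hfeq]
            exact (List.suffix_append _ _).isInfix
          · intro h
            rw [hfeq] at h
            have h1 : α' ++ (a (2*j+2) ++ β) = [] ++ (a (2*j+2) ++ β) := by
              rw [← h]
              simp
            exact hα'ne (List.append_cancel_right h1)
        have hhead : (b (2*j+1+1)).head? = (a (2*j+2) ++ β).head? := by
          rw [List.head?_append_of_ne_nil _ (ane _)]
          rw [show (2*j+1+1) = 2*j+2 by ring, ← hAB2 j]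
          exact List.head?_append_of_ne_nil _ (ane _)
        have hcomp : M.toQuiverData.Composable (b (2*j+1)) (a (2*j+2) ++ β) :=
          composable_of_eq ((hbpair (2*j+1)).comp) rfl hhead.symm
        have hz : M.IsZero (b (2*j+1) ++ (a (2*j+2) ++ β)) := by
          obtain ⟨w, hw⟩ := hα's
          refine ⟨f, hfF, ?_⟩
          rw [hfeq, ← hw, List.append_assoc]
          exact (List.suffix_append _ _).isInfix
        have hB2pre : b (2*j+1+1) <+: a (2*j+2) ++ β :=
          (hbpair (2*j+1)).minQ _ (by simp [ane (2*j+2)]) hnzq'' hcomp hz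
        rw [show (2*j+1+1) = 2*j+2 by ring, ← hAB2 j] at hB2pre
        exact ((List.prefix_append_right_inj _).mp hB2pre).trans hβp
    · -- minP
      intro p' hp'ne hp'nz hp'comp hp'zero
      have hp'zero' := hp'zero
      obtain ⟨f, hfF, hfinf⟩ := hp'zero'
      obtain ⟨α, β, hαβ, hαne, hβne, hαs, hβp⟩ :=
        straddle hp'nz.2 hTnz2.2 hfF hfinf
      have hcαβ : M.toQuiverData.Composable α β :=
        composable_of_isPath_append (hαβ ▸ M.F_path f hfF)
      have hβA3 : β <+: a (2*j+2+1) := hβp.trans ⟨b (2*j+2+1), (hodd2 j).symm⟩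
      have hz1 : M.IsZero (α ++ a (2*j+2+1)) :=
        ⟨f, hfF, by rw [hαβ]; exact ((List.prefix_append_right_inj _).mpr hβA3).isInfix⟩
      have hhead : (a (2*j+2+1)).head? = β.head? := by
        obtain ⟨w, hw⟩ := hβA3
        rw [← hw]
        exact List.head?_append_of_ne_nil _ hβne
      have hA2α : a (2*j+2) <:+ α :=
        (hapair (2*j+2)).minP α hαne (nonzero_mono hp'nz hαs.isInfix)
          (composable_of_eq hcαβ rfl hhead) hz1
      obtain ⟨w, hw⟩ := hA2α.trans hαs
      have hwne : w ≠ [] := by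
        intro h
        rw [h, List.nil_append] at hw
        apply (bnz (2*j+2)).2
        rw [← hAB2 j, hw]
        exact hp'zero
      have hwnz : M.Nonzero w :=
        nonzero_mono hp'nz ⟨[], a (2*j+2), by rw [List.nil_append, hw]⟩
      have hcompw : M.toQuiverData.Composable w (b (2*j+1+1)) := by
        have hpath : M.toQuiverData.IsPath (w ++ a (2*j+2)) := by
          rw [hw]; exact hp'nz.1
        refine composable_of_eq (composable_of_isPath_append hpath) rfl ?_
        rw [show (2*j+1+1) = 2*j+2 by ring, ← hAB2 j]
        exact List.head?_append_of_ne_nil _ (ane _)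
      have hzw : M.IsZero (w ++ b (2*j+1+1)) := by
        rw [show (2*j+1+1) = 2*j+2 by ring, ← hAB2 j, ← List.append_assoc, hw]
        exact hp'zero
      have hB1w : b (2*j+1) <:+ w := (hbpair (2*j+1)).minP w hwne hwnz hcompw hzw
      rw [← hw]
      exact suffix_append_right hB1w
  -- the perfect sequence for the complement
  have Tper : ∀ j, T (j + m*n) = T j := by
    intro j
    have h1 := hAB (j + m*n)
    have ha' : a (2*(j+m*n)) = a (2*j) := by
      rw [show 2*(j+m*n) = 2*j + (2*n)*m by ring]
      exact aper' (2*n) (2*j)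
    have hb' : b (2*(j+m*n)) = b (2*j) := by
      rw [show 2*(j+m*n) = 2*j + (2*m)*n by ring]
      exact bper' (2*m) (2*j)
    rw [ha', hb'] at h1
    exact List.append_cancel_left (h1.trans (hAB j).symm)
  set τ : ℕ → List E := fun i => if i % 2 = 0 then T (i/2) else b i ++ a (i+1) with hτ
  have hτeven : ∀ i, i % 2 = 0 → τ i = T (i/2) := by
    intro i h
    simp [hτ, h]
  have hτodd : ∀ i, i % 2 = 1 → τ i = b i ++ a (i+1) := by
    intro i h
    simp [hτ, h]
  refine ⟨2*(m*n), τ, by positivity, ?_, ?_, ?_⟩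
  · have h1 : τ 0 = T 0 := hτeven 0 rfl
    have h2 := hAB 0
    rw [show 2*0 = 0 by ring, ha0, hb0] at h2
    rw [h1, ← h2, List.drop_left]
  · intro i
    rcases Nat.mod_two_eq_zero_or_one i with h | h
    · have h2 : (i + 2*(m*n)) % 2 = 0 := by omega
      rw [hτeven _ h, hτeven _ h2,
        show (i + 2*(m*n))/2 = i/2 + m*n by omega, Tper]
    · have h2 : (i + 2*(m*n)) % 2 = 1 := by omega
      rw [hτodd _ h, hτodd _ h2]
      rw [show i + 2*(m*n) + 1 = (i+1) + (2*n)*m by ring, aper']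
      rw [show i + 2*(m*n) = i + (2*m)*n by ring, bper']
  · intro i
    rcases Nat.mod_two_eq_zero_or_one i with h | h
    · obtain ⟨j, hj⟩ : ∃ j, i = 2*j := ⟨i/2, by omega⟩
      have h2 : (i+1) % 2 = 1 := by omega
      rw [hτeven _ h, hτodd _ h2, hj,
        show 2*j/2 = j by omega, show 2*j+1+1 = 2*j+2 by ring]
      exact pair₁ j
    · obtain ⟨j, hj⟩ : ∃ j, i = 2*j+1 := ⟨i/2, by omega⟩
      have h2 : (i+1) % 2 = 0 := by omega
      rw [hτodd _ h, hτeven _ h2, hj,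
        show (2*j+1+1)/2 = j+1 by omega, show 2*j+1+1 = 2*j+2 by ring]
      exact pair₂ j

end MonomialData
namespace MonomialData
variable {V E : Type} {M : MonomialData V E}

lemma coelem_factor_exists : ∀ (N : ℕ) (p : List E), p.length ≤ N → M.IsPerfect p →
    ∃ rs : List (List E), rs ≠ [] ∧ (∀ r ∈ rs, M.CoElementary r) ∧ rs.flatten = p := by
  intro N
  induction N with
  | zero =>
    intro p hlen hp
    exact absurd (List.length_eq_zero_iff.mp (Nat.le_zero.mp hlen)) (perfect_ne_nil hp)
  | succ N ih =>
    intro p hlen hp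
    classical
    have hP : ∃ k, ∃ r : List E, M.IsPerfect r ∧ r <+: p ∧ r.length = k :=
      ⟨p.length, p, hp, List.prefix_refl p, rfl⟩
    obtain ⟨r, hr1, hr2, hr3⟩ := Nat.find_spec hP
    have hco : M.CoElementary r := by
      refine ⟨hr1, ?_⟩
      rintro ⟨q, hq1, hq2, hq3⟩
      have hqlt : q.length < r.length := by
        rcases lt_or_eq_of_le hq2.length_le with h | h
        · exact h
        · exact absurd (hq2.eq_of_length h) hq3
      exact Nat.find_min hP (hr3 ▸ hqlt) ⟨q, hq1, hq2.trans hr2, rfl⟩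
    by_cases hrp : r = p
    · refine ⟨[p], by simp, ?_, by simp⟩
      intro x hx
      rw [List.mem_singleton] at hx
      rw [hx, ← hrp]
      exact hco
    · have ht : M.IsPerfect (p.drop r.length) := drop_perfect hp hr1 hr2 hrp
      have hrne : r ≠ [] := perfect_ne_nil hr1
      have hrpos : 0 < r.length := List.length_pos_iff.mpr hrne
      have hlt : (p.drop r.length).length ≤ N := by
        rw [List.length_drop]
        omega
      obtain ⟨rs, hrs1, hrs2, hrs3⟩ := ih _ hlt ht
      refine ⟨r :: rs, by simp, ?_, ?_⟩
      · intro x hx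
        rcases List.mem_cons.mp hx with h | h
        · rw [h]; exact hco
        · exact hrs2 x h
      · rw [List.flatten_cons, hrs3]
        exact List.prefix_iff_eq_append.mp hr2
lemma coelem_factor_unique : ∀ rs ss : List (List E),
    (∀ r ∈ rs, M.CoElementary r) → (∀ s ∈ ss, M.CoElementary s) →
    rs.flatten = ss.flatten → rs = ss := by
  intro rs
  induction rs with
  | nil =>
    intro ss _ hss h
    cases ss with
    | nil => rfl
    | cons s ss' =>
      exfalso
      have hsne : s ≠ [] := perfect_ne_nil (hss s (by simp)).1
      have h' : s ++ ss'.flatten = [] := by simpa using h.symm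
      exact hsne (List.append_eq_nil_iff.mp h').1
  | cons r rs' ih =>
    intro ss hrs hss h
    cases ss with
    | nil =>
      exfalso
      have hrne : r ≠ [] := perfect_ne_nil (hrs r (by simp)).1
      have h' : r ++ rs'.flatten = [] := by simpa using h
      exact hrne (List.append_eq_nil_iff.mp h').1
    | cons s ss' =>
      simp only [List.flatten_cons] at h
      have hcomp : r <+: s ∨ s <+: r :=
        List.prefix_or_prefix_of_prefix ⟨rs'.flatten, rfl⟩ ⟨ss'.flatten, h.symm⟩
      have hr := hrs r (by simp)
      have hs := hss s (by simp)
      have hrseq : r = s := by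
        rcases hcomp with hc | hc
        · by_contra hne
          exact hs.2 ⟨r, hr.1, hc, hne⟩
        · by_contra hne
          exact hr.2 ⟨s, hs.1, hc, fun h' => hne h'.symm⟩
      subst hrseq
      have h2 : rs'.flatten = ss'.flatten := List.append_cancel_left h
      rw [ih ss' (fun x hx => hrs x (by simp [hx])) (fun x hx => hss x (by simp [hx])) h2]

end MonomialData

/-- every perfect path factors uniquely as a concatenation of
finitely many co-elementary perfect paths. -/
theorem perfect_unique_coelementary_factorization {V E : Type}
    (M : MonomialData V E) (p : List E) (hp : M.IsPerfect p) :
    ∃! rs : List (List E),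
      rs ≠ [] ∧ (∀ r ∈ rs, M.CoElementary r) ∧ rs.flatten = p := by
  obtain ⟨rs, h1, h2, h3⟩ :=
    MonomialData.coelem_factor_exists p.length p le_rfl hp
  refine ⟨rs, ⟨h1, h2, h3⟩, ?_⟩
  rintro ss ⟨hs1, hs2, hs3⟩
  exact MonomialData.coelem_factor_unique ss rs hs2 h2 (by rw [hs3, h3])
end
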